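/- Let A: ℝ → Matrix (Fin 2) (Fin 2) ℝ, and let g: ℝ → ℝ² be differentiable at t₀ with g(t₀) ≠ 0 and g'(t₀) = −A(t₀)ᵀ·g(t₀). Then n := g/‖g‖ is differentiable at t₀ and n'(t₀) = −A(t₀)ᵀ·n(t₀) + ((A(t₀)·n(t₀))·n(t₀))·n(t₀). -/

import Mathlib

/-!
Differentiating `n = g / ‖g‖` gives `(g' - ⟨g', n⟩ n) / ‖g‖`, the component of `g' / ‖g‖`
orthogonal to `n`. For `g' = -Aᵀ g` this is `-Aᵀ n + ⟨Aᵀ n, n⟩ n`, and `⟨Aᵀ n, n⟩ = ⟨A n, n⟩`.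
-/

open Matrix

theorem dotProduct_self_pos {ι : Type*} [Fintype ι] {v : ι → ℝ} (hv : v ≠ 0) : 0 < v ⬝ᵥ v := by
  simpa using (dotProduct_self_star_pos_iff (v := v)).mpr hv

section Normalize

variable {ι : Type*} [Fintype ι] {f g : ℝ → ι → ℝ} {f' g' : ι → ℝ} {t : ℝ}

theorem HasDerivAt.dotProduct (hf : HasDerivAt f f' t) (hg : HasDerivAt g g' t) :
    HasDerivAt (fun s => f s ⬝ᵥ g s) (f' ⬝ᵥ g t + f t ⬝ᵥ g') t := by
  have hfi := hasDerivAt_pi.mp hf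
  have hgi := hasDerivAt_pi.mp hg
  simp only [_root_.dotProduct, ← Finset.sum_add_distrib]
  exact HasDerivAt.fun_sum fun i _ => (hfi i).mul (hgi i)

theorem HasDerivAt.inv_sqrt_dotProduct_self_smul (hg : HasDerivAt g g' t) (h0 : g t ≠ 0) :
    let n := (√(g t ⬝ᵥ g t))⁻¹ • g t
    HasDerivAt (fun s => (√(g s ⬝ᵥ g s))⁻¹ • g s)
      ((√(g t ⬝ᵥ g t))⁻¹ • (g' - (g' ⬝ᵥ n) • n)) t := by
  intro n
  have hpos := dotProduct_self_pos h0
  have hsqrt : √(g t ⬝ᵥ g t) ≠ 0 := Real.sqrt_ne_zero'.mpr hpos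
  have := (((hg.dotProduct hg).sqrt hpos.ne').inv hsqrt).smul hg
  refine this.congr_deriv ?_
  simp only [n, smul_sub, smul_smul, dotProduct_smul, smul_eq_mul, dotProduct_comm (g t) g']
  rw [Pi.inv_apply, sub_eq_add_neg, ← neg_smul]
  congr 2
  field_simp
  ring

end Normalize

theorem smul_sub_dotProduct_smul_neg_transpose_mulVec {ι : Type*} [Fintype ι]
    (M : Matrix ι ι ℝ) (v : ι → ℝ) (c : ℝ) :
    c • (-(Mᵀ *ᵥ v) - (-(Mᵀ *ᵥ v) ⬝ᵥ c • v) • c • v) =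
      -(Mᵀ *ᵥ c • v) + (M *ᵥ c • v ⬝ᵥ c • v) • c • v := by
  have hscalar : (Mᵀ *ᵥ v ⬝ᵥ c • v) * c = M *ᵥ c • v ⬝ᵥ c • v := by
    rw [mul_comm, ← smul_eq_mul, ← smul_dotProduct, ← mulVec_smul, mulVec_transpose,
      ← dotProduct_mulVec, dotProduct_comm]
  rw [smul_sub, smul_neg, ← mulVec_smul, smul_comm c _ (c • v), smul_smul, neg_dotProduct, neg_mul,
    hscalar, neg_smul, sub_neg_eq_add]

/-- Evolution equation for the unit normal `n = g/‖g‖` along a characteristic: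
if `g` is differentiable at `t₀` with `g(t₀) ≠ 0` and `g'(t₀) = −A(t₀)ᵀ g(t₀)`,
then `n` is differentiable at `t₀` with
`n'(t₀) = −A(t₀)ᵀ n(t₀) + ((A(t₀) n(t₀))·n(t₀)) n(t₀)`. -/
theorem normal_evolution
    (A : ℝ → Matrix (Fin 2) (Fin 2) ℝ) (g : ℝ → Fin 2 → ℝ) (t₀ : ℝ)
    (hg0 : g t₀ ≠ 0)
    (hg : HasDerivAt g (-((A t₀)ᵀ *ᵥ g t₀)) t₀)
    (n : ℝ → Fin 2 → ℝ)
    (hn : n = fun t => (Real.sqrt (g t ⬝ᵥ g t))⁻¹ • g t) :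
    HasDerivAt n (-((A t₀)ᵀ *ᵥ n t₀) + ((A t₀ *ᵥ n t₀) ⬝ᵥ n t₀) • n t₀) t₀ := by
  subst hn
  exact (hg.inv_sqrt_dotProduct_self_smul hg0).congr_deriv
    (smul_sub_dotProduct_smul_neg_transpose_mulVec _ _ _)
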